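/- Dynamic programming recursion for the optimal on-the-line quantizer is correct: let s₁ < ... < s_m be candidate boundary values and, for labeled 2D points, define E(s_i, b) as the minimum number of misclassified points among points with both coordinates ≤ s_i using b common boundaries from {s₁,...,s_{i−1}}. Then E(s_i, b) = min over ℓ < i of [ E(s_ℓ, b−1) + min over classes c of |{j : s_ℓ < x₁^(j) ≤ s_i, s_ℓ < x₂^(j) ≤ s_i, y^(j) = c}| ], for linearly separable data (separated by x₁ = x₂). -/

import Mathlib

open Finset

/-!
Each point falls into the cell `(enc x₁, enc x₂)`. A cell off the diagonal lies strictly on one side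
of the line `x₁ = x₂`, hence is pure, so the majority decoder errs exactly on the minority class of
the diagonal cells. If `a` is the largest boundary of `B`, the diagonal cells of `B` below `a` are
those of `B \ {a}` for the points below `(a, a)`, and the top diagonal cell is the corner
`(a, t] × (a, t]`. So the cost of `B` is the cost of `B \ {a}` up to `a` plus the minority count of
the corner, and minimising over `B` means minimising over its largest element `a = s ℓ` and then
over `B \ {a} ⊆ {s j : j < ℓ}`.
-/

/-- Label of a 2D point: `true` iff `x₁ > x₂` (linearly separable by the line `x₁ = x₂`). -/
noncomputable def lbl12 (p : ℝ × ℝ) : Bool := decide (p.2 < p.1)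

/-- Cell index of a scalar under boundary set `B` (bins of the form `(d_j, d_{j+1}]`). -/
noncomputable def enc12 (B : Finset ℝ) (u : ℝ) : ℕ := (B.filter (fun dd => dd < u)).card

noncomputable def pts12 (N : ℕ) (x : Fin N → ℝ × ℝ) (t : ℝ) : Finset (Fin N) :=
  univ.filter (fun j => (x j).1 ≤ t ∧ (x j).2 ≤ t)

/-- Combined message of point `j` under the on-the-line quantizer with common boundaries `B`. -/
noncomputable def msg12 (N : ℕ) (x : Fin N → ℝ × ℝ) (B : Finset ℝ) (j : Fin N) : ℕ × ℕ :=
  (enc12 B (x j).1, enc12 B (x j).2)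

/-- Misclassification count (majority decoder in each cell) of boundary set `B`, restricted to
points with both coordinates at most `t`. -/
noncomputable def mis12 (N : ℕ) (x : Fin N → ℝ × ℝ) (B : Finset ℝ) (t : ℝ) : ℕ :=
  ∑ z ∈ (pts12 N x t).image (msg12 N x B),
    (((pts12 N x t).filter (fun j => msg12 N x B j = z)).card -
      max (((pts12 N x t).filter (fun j => msg12 N x B j = z ∧ lbl12 (x j) = true)).card)
          (((pts12 N x t).filter (fun j => msg12 N x B j = z ∧ lbl12 (x j) = false)).card))

/-- `Eopt12 N x s i b`: minimum misclassification over points with both coordinates `≤ s i`,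
using `b` common boundaries taken from `{s ℓ : ℓ < i}`. -/
noncomputable def Eopt12 (N : ℕ) (x : Fin N → ℝ × ℝ) {m : ℕ} (s : Fin m → ℝ) (i : Fin m) (b : ℕ) : ℕ :=
  sInf {L | ∃ B : Finset ℝ,
    B ⊆ (univ.filter (fun j : Fin m => j < i)).image s ∧ B.card = b ∧ L = mis12 N x B (s i)}

noncomputable def cost12 (N : ℕ) (x : Fin N → ℝ × ℝ) (a t : ℝ) (c : Bool) : ℕ :=
  (univ.filter (fun j : Fin N =>
      a < (x j).1 ∧ (x j).1 ≤ t ∧ a < (x j).2 ∧ (x j).2 ≤ t ∧ lbl12 (x j) = c)).card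

lemma enc12_le_card (B : Finset ℝ) (u : ℝ) : enc12 B u ≤ #B := card_filter_le _ _

lemma enc12_mono (B : Finset ℝ) : Monotone (enc12 B) := fun _ _ h =>
  card_le_card (monotone_filter_right B fun _ _ hd => hd.trans_le h)

lemma enc12_insert {a : ℝ} {B : Finset ℝ} (hB : ∀ d ∈ B, d < a) (u : ℝ) :
    enc12 (insert a B) u = if u ≤ a then enc12 B u else #B + 1 := by
  unfold enc12
  split_ifs with hua
  · rw [filter_insert, if_neg hua.not_gt]
  · have hlt : ∀ d ∈ insert a B, d < u := by
      intro d hd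
      rcases mem_insert.1 hd with rfl | hd
      · exact not_le.1 hua
      · exact (hB d hd).trans (not_le.1 hua)
    rw [filter_true_of_mem hlt, card_insert_of_notMem fun ha => (hB a ha).false]

lemma enc12_insert_eq_iff {a t : ℝ} {B : Finset ℝ} (hB : ∀ d ∈ B, d < a) (hat : a < t)
    {k : ℕ} (hk : k ≤ #B) (u : ℝ) :
    (u ≤ t ∧ enc12 (insert a B) u = k) ↔ (u ≤ a ∧ enc12 B u = k) := by
  rw [enc12_insert hB]
  split_ifs with hua
  · exact ⟨fun h => ⟨hua, h.2⟩, fun h => ⟨hua.trans hat.le, h.2⟩⟩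
  · exact ⟨fun h => by omega, fun h => absurd h.1 hua⟩

lemma enc12_insert_eq_card_iff {a t : ℝ} {B : Finset ℝ} (hB : ∀ d ∈ B, d < a) (u : ℝ) :
    (u ≤ t ∧ enc12 (insert a B) u = #B + 1) ↔ (a < u ∧ u ≤ t) := by
  rw [enc12_insert hB]
  split_ifs with hua
  · have := enc12_le_card B u
    exact ⟨fun h => by omega, fun h => absurd hua (not_le.2 h.1)⟩
  · exact ⟨fun h => ⟨not_le.1 hua, h.1⟩, fun h => ⟨h.2, rfl⟩⟩

lemma lbl12_eq_false_of_lt {p : ℝ × ℝ} (h : p.1 < p.2) : lbl12 p = false := by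
  simp [lbl12, h.le]

lemma lbl12_eq_true_of_lt {p : ℝ × ℝ} (h : p.2 < p.1) : lbl12 p = true := by
  simp [lbl12, h]

section Cells

variable {N : ℕ} (x : Fin N → ℝ × ℝ)

noncomputable def cell12 (B : Finset ℝ) (t : ℝ) (z : ℕ × ℕ) (c : Bool) : Finset (Fin N) :=
  (pts12 N x t).filter fun j => msg12 N x B j = z ∧ lbl12 (x j) = c

lemma card_filter_msg12_eq (B : Finset ℝ) (t : ℝ) (z : ℕ × ℕ) :
    #((pts12 N x t).filter fun j => msg12 N x B j = z) =
      #(cell12 x B t z true) + #(cell12 x B t z false) := by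
  rw [cell12, cell12, ← card_union_of_disjoint]
  · congr 1
    ext j
    cases h : lbl12 (x j) <;> simp [h]
  · exact disjoint_filter.2 fun j _ h1 h2 => by simp_all

lemma mis12_eq_sum_min (B : Finset ℝ) (t : ℝ) :
    mis12 N x B t = ∑ z ∈ (pts12 N x t).image (msg12 N x B),
      min #(cell12 x B t z true) #(cell12 x B t z false) := by
  refine sum_congr rfl fun z _ => ?_
  change _ - max #(cell12 x B t z true) #(cell12 x B t z false) = _
  rw [card_filter_msg12_eq]
  have := min_add_max #(cell12 x B t z true) #(cell12 x B t z false)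
  omega

lemma msg12_eq_iff {B : Finset ℝ} {j : Fin N} {z : ℕ × ℕ} :
    msg12 N x B j = z ↔ enc12 B (x j).1 = z.1 ∧ enc12 B (x j).2 = z.2 := Prod.ext_iff

/-- Off the diagonal a cell lies strictly on one side of the line `x₁ = x₂`, so it is pure. -/
lemma min_card_cell12_eq_zero_of_ne (B : Finset ℝ) (t : ℝ) {z : ℕ × ℕ} (hz : z.1 ≠ z.2) :
    min #(cell12 x B t z true) #(cell12 x B t z false) = 0 := by
  rcases hz.lt_or_gt with hlt | hgt
  · suffices cell12 x B t z true = ∅ by simp [this]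
    refine filter_eq_empty_iff.2 fun j _ ⟨hm, hl⟩ => ?_
    rw [msg12_eq_iff] at hm
    have hx : (x j).1 < (x j).2 := (enc12_mono B).reflect_lt (by omega)
    simp [lbl12_eq_false_of_lt hx] at hl
  · suffices cell12 x B t z false = ∅ by simp [this]
    refine filter_eq_empty_iff.2 fun j _ ⟨hm, hl⟩ => ?_
    rw [msg12_eq_iff] at hm
    have hx : (x j).2 < (x j).1 := (enc12_mono B).reflect_lt (by omega)
    simp [lbl12_eq_true_of_lt hx] at hl

lemma mis12_eq_sum_diag (B : Finset ℝ) (t : ℝ) :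
    mis12 N x B t =
      ∑ k ∈ range (#B + 1), min #(cell12 x B t (k, k) true) #(cell12 x B t (k, k) false) := by
  set g : ℕ × ℕ → ℕ := fun z => min #(cell12 x B t z true) #(cell12 x B t z false)
  have hsub : (pts12 N x t).image (msg12 N x B) ⊆ range (#B + 1) ×ˢ range (#B + 1) := by
    simp only [subset_iff, mem_image, mem_product, mem_range, Nat.lt_succ_iff]
    rintro _ ⟨j, _, rfl⟩
    exact ⟨enc12_le_card _ _, enc12_le_card _ _⟩
  have hdiag : (range (#B + 1)).image (fun k => (k, k)) ⊆ range (#B + 1) ×ˢ range (#B + 1) := by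
    simp only [subset_iff, mem_image, mem_product]
    rintro _ ⟨k, hk, rfl⟩
    exact ⟨hk, hk⟩
  have hempty : ∀ z ∉ (pts12 N x t).image (msg12 N x B), g z = 0 := by
    intro z hz
    suffices cell12 x B t z true = ∅ by simp [g, this]
    exact filter_eq_empty_iff.2 fun j hj ⟨hm, _⟩ => hz (mem_image.2 ⟨j, hj, hm⟩)
  calc mis12 N x B t = ∑ z ∈ (pts12 N x t).image (msg12 N x B), g z := mis12_eq_sum_min x B t
    _ = ∑ z ∈ range (#B + 1) ×ˢ range (#B + 1), g z :=
      sum_subset hsub fun z _ hz => hempty z hz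
    _ = ∑ z ∈ (range (#B + 1)).image (fun k => (k, k)), g z := by
      refine (sum_subset hdiag fun z hzB hz =>
        min_card_cell12_eq_zero_of_ne x B t fun h => hz ?_).symm
      exact mem_image.2 ⟨z.1, (mem_product.1 hzB).1, Prod.ext rfl h⟩
    _ = ∑ k ∈ range (#B + 1), g (k, k) :=
      sum_image fun _ _ _ _ h => (Prod.ext_iff.1 h).1

variable {a t : ℝ} {B : Finset ℝ}

lemma cell12_insert_of_le (hB : ∀ d ∈ B, d < a) (hat : a < t) {k : ℕ} (hk : k ≤ #B) (c : Bool) :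
    cell12 x (insert a B) t (k, k) c = cell12 x B a (k, k) c := by
  ext j
  have h₁ := enc12_insert_eq_iff hB hat hk (x j).1
  have h₂ := enc12_insert_eq_iff hB hat hk (x j).2
  simp only [cell12, pts12, msg12_eq_iff, mem_filter, mem_univ, true_and]
  tauto

lemma card_cell12_insert_top (hB : ∀ d ∈ B, d < a) (c : Bool) :
    #(cell12 x (insert a B) t (#B + 1, #B + 1) c) = cost12 N x a t c := by
  unfold cell12 cost12 pts12
  rw [filter_filter]
  congr 1
  ext j
  have h₁ := enc12_insert_eq_card_iff (t := t) hB (x j).1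
  have h₂ := enc12_insert_eq_card_iff (t := t) hB (x j).2
  simp only [msg12_eq_iff, mem_filter, mem_univ, true_and]
  tauto

lemma mis12_insert (hB : ∀ d ∈ B, d < a) (hat : a < t) :
    mis12 N x (insert a B) t =
      mis12 N x B a + min (cost12 N x a t true) (cost12 N x a t false) := by
  rw [mis12_eq_sum_diag, mis12_eq_sum_diag, card_insert_of_notMem fun ha => (hB a ha).false,
    sum_range_succ, card_cell12_insert_top x hB, card_cell12_insert_top x hB]
  congr 1
  refine sum_congr rfl fun k hk => ?_
  have hk : k ≤ #B := Nat.lt_succ_iff.1 (mem_range.1 hk)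
  rw [cell12_insert_of_le x hB hat hk, cell12_insert_of_le x hB hat hk]

end Cells

section Recursion

variable {N m : ℕ} (x : Fin N → ℝ × ℝ) {s : Fin m → ℝ}

noncomputable def grid12 (s : Fin m → ℝ) (i : Fin m) : Finset ℝ :=
  (univ.filter fun j : Fin m => j < i).image s

lemma mem_grid12 {i : Fin m} {d : ℝ} : d ∈ grid12 s i ↔ ∃ j < i, s j = d := by
  simp [grid12]

lemma card_grid12 (hs : StrictMono s) (i : Fin m) : #(grid12 s i) = i := by
  rw [grid12, card_image_of_injective _ hs.injective, filter_gt_eq_Iio, Fin.card_Iio]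

lemma lt_of_mem_grid12 (hs : StrictMono s) {i : Fin m} {d : ℝ} (hd : d ∈ grid12 s i) : d < s i := by
  obtain ⟨j, hj, rfl⟩ := mem_grid12.1 hd
  exact hs hj

lemma grid12_mono : Monotone (grid12 s) := fun _ _ h _ hd => by
  obtain ⟨j, hj, rfl⟩ := mem_grid12.1 hd
  exact mem_grid12.2 ⟨j, hj.trans_le h, rfl⟩

lemma Eopt12_le {i : Fin m} {B : Finset ℝ} (hB : B ⊆ grid12 s i) :
    Eopt12 N x s i #B ≤ mis12 N x B (s i) :=
  Nat.sInf_le ⟨B, hB, rfl, rfl⟩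

lemma exists_mis12_eq_Eopt12 (hs : StrictMono s) {i : Fin m} {b : ℕ} (hbi : b ≤ i) :
    ∃ B ⊆ grid12 s i, #B = b ∧ mis12 N x B (s i) = Eopt12 N x s i b := by
  obtain ⟨B, hB, hcard⟩ := exists_subset_card_eq (s := grid12 s i) ((card_grid12 hs i).symm ▸ hbi)
  have hne : {L | ∃ B ⊆ grid12 s i, #B = b ∧ L = mis12 N x B (s i)}.Nonempty :=
    ⟨_, B, hB, hcard, rfl⟩
  obtain ⟨B, hB, hcard, hL⟩ := Nat.sInf_mem hne
  exact ⟨B, hB, hcard, hL.symm⟩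

/-- Witness: an optimal configuration for `(ℓ, b)` together with the boundary `s ℓ`. -/
lemma Eopt12_succ_le (hs : StrictMono s) {i ℓ : Fin m} (hℓi : ℓ < i) {b : ℕ} (hbℓ : b ≤ ℓ) :
    Eopt12 N x s i (b + 1) ≤
      Eopt12 N x s ℓ b + min (cost12 N x (s ℓ) (s i) true) (cost12 N x (s ℓ) (s i) false) := by
  obtain ⟨B, hB, rfl, hopt⟩ := exists_mis12_eq_Eopt12 x hs hbℓ
  have hlt : ∀ d ∈ B, d < s ℓ := fun d hd => lt_of_mem_grid12 hs (hB hd)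
  have hins : insert (s ℓ) B ⊆ grid12 s i :=
    insert_subset (mem_grid12.2 ⟨ℓ, hℓi, rfl⟩) (hB.trans (grid12_mono hℓi.le))
  rw [← hopt, ← mis12_insert x hlt (hs hℓi), ← card_insert_of_notMem fun h => (hlt _ h).false]
  exact Eopt12_le x hins

/-- `s ℓ` is the largest boundary of an optimal configuration for `(i, b + 1)`. -/
lemma exists_add_cost_le_Eopt12_succ (hs : StrictMono s) {i : Fin m} {b : ℕ} (hbi : b + 1 ≤ i) :
    ∃ ℓ < i, b ≤ (ℓ : ℕ) ∧
      Eopt12 N x s ℓ b + min (cost12 N x (s ℓ) (s i) true) (cost12 N x (s ℓ) (s i) false) ≤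
        Eopt12 N x s i (b + 1) := by
  obtain ⟨B, hB, hcard, hopt⟩ := exists_mis12_eq_Eopt12 x hs hbi
  have hne : B.Nonempty := card_pos.1 (by omega)
  obtain ⟨ℓ, hℓi, hℓ⟩ := mem_grid12.1 (hB (B.max'_mem hne))
  have hmem : s ℓ ∈ B := hℓ ▸ B.max'_mem hne
  have hlt : ∀ d ∈ B.erase (s ℓ), d < s ℓ := fun d hd =>
    lt_of_le_of_ne (hℓ ▸ B.le_max' d (mem_of_mem_erase hd)) (ne_of_mem_erase hd)
  have herase : B.erase (s ℓ) ⊆ grid12 s ℓ := fun d hd => by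
    obtain ⟨j, -, rfl⟩ := mem_grid12.1 (hB (mem_of_mem_erase hd))
    exact mem_grid12.2 ⟨j, hs.lt_iff_lt.1 (hlt _ hd), rfl⟩
  have hcard' : #(B.erase (s ℓ)) = b := by rw [card_erase_of_mem hmem, hcard, Nat.add_sub_cancel]
  refine ⟨ℓ, hℓi, hcard' ▸ card_grid12 hs ℓ ▸ card_le_card herase, ?_⟩
  rw [← hopt, ← insert_erase hmem, mis12_insert x hlt (hs hℓi), ← hcard']
  exact Nat.add_le_add_right (Eopt12_le x herase) _

end Recursion

theorem stmt_12_general (N m : ℕ) (x : Fin N → ℝ × ℝ)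
    (s : Fin m → ℝ) (hs : StrictMono s) (i : Fin m) (b : ℕ)
    (hb : 1 ≤ b) (hbi : b ≤ (i : ℕ)) :
    Eopt12 N x s i b =
      sInf {v | ∃ ℓ : Fin m, ℓ < i ∧ b - 1 ≤ (ℓ : ℕ) ∧
        v = Eopt12 N x s ℓ (b - 1) +
            min (cost12 N x (s ℓ) (s i) true) (cost12 N x (s ℓ) (s i) false)} := by
  obtain ⟨b, rfl⟩ := Nat.exists_eq_add_of_le' hb
  rw [Nat.add_sub_cancel]
  apply le_antisymm
  · let ℓ₀ : Fin m := ⟨i - 1, by omega⟩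
    have hℓ₀i : ℓ₀ < i := Fin.lt_def.2 (show (i : ℕ) - 1 < i by omega)
    refine le_csInf ⟨_, ⟨ℓ₀, hℓ₀i, show b ≤ (i : ℕ) - 1 by omega, rfl⟩⟩ ?_
    rintro _ ⟨ℓ, hℓi, hbℓ, rfl⟩
    exact Eopt12_succ_le x hs hℓi hbℓ
  · obtain ⟨ℓ, hℓi, hbℓ, hle⟩ := exists_add_cost_le_Eopt12_succ x hs hbi
    refine le_trans (Nat.sInf_le ?_) hle
    exact ⟨ℓ, hℓi, hbℓ, rfl⟩

/-- Bellman recursion for the optimal on-the-line quantizer with linearly separable data: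
`E(s_i, b) = min_{ℓ < i} [ E(s_ℓ, b−1) + min_c |{j : s_ℓ < x₁,x₂ ≤ s_i, y^(j) = c}| ]`. -/
theorem stmt_12 (N m : ℕ) (x : Fin N → ℝ × ℝ)
    (hsep : ∀ j, (x j).1 ≠ (x j).2)
    (s : Fin m → ℝ) (hs : StrictMono s) (i : Fin m) (b : ℕ)
    (hb : 1 ≤ b) (hbi : b ≤ (i : ℕ)) :
    Eopt12 N x s i b =
      sInf {v | ∃ ℓ : Fin m, ℓ < i ∧ b - 1 ≤ (ℓ : ℕ) ∧
        v = Eopt12 N x s ℓ (b - 1) +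
            min (cost12 N x (s ℓ) (s i) true) (cost12 N x (s ℓ) (s i) false)} :=
  stmt_12_general N m x s hs i b hb hbi
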